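/- arXiv:1509.05698 — 11 statements merged into one kernel-verified Lean document; each statement's English description precedes it below -/
import Mathlib

section
/- Let r, s be positive integers with r ≠ s, write n = r + s = 2^a·b with b odd, and g = gcd(r,s) = 2^c·d with d odd. Let (r',s') = ω(r,s) and g' = gcd(r',s'). Then g' ∈ {g, 2g}, and g' = g if and only if a = c. -/
lemma omega_gcd_key (r s : ℕ) (hr : 0 < r) (hlt : r < s) :
    (Nat.gcd (2 * r) (s - r) = Nat.gcd r s ∨
      Nat.gcd (2 * r) (s - r) = 2 * Nat.gcd r s) ∧
      (Nat.gcd (2 * r) (s - r) = Nat.gcd r s ↔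
        padicValNat 2 (r + s) = padicValNat 2 (Nat.gcd r s)) := by
  set d := Nat.gcd r s with hd
  have hdpos : 0 < d := Nat.gcd_pos_of_pos_left s hr
  set x := r / d with hx
  set y := s / d with hy
  have hrx : r = d * x := by rw [hx, Nat.mul_div_cancel' (Nat.gcd_dvd_left r s)]
  have hsy : s = d * y := by rw [hy, Nat.mul_div_cancel' (Nat.gcd_dvd_right r s)]
  have hco : Nat.Coprime x y := Nat.coprime_div_gcd_div_gcd hdpos
  have hxy : x < y := by
    have := hlt; rw [hrx, hsy] at this
    exact lt_of_mul_lt_mul_left this (Nat.le_of_lt hdpos)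
  have hxpos : 0 < x := by
    rcases Nat.eq_zero_or_pos x with h | h
    · rw [h, Nat.mul_zero] at hrx; omega
    · exact h
  -- compute the gcd
  have hco' : Nat.Coprime x (y - x) := by
    have : Nat.gcd x (y - x) = Nat.gcd x y := Nat.gcd_sub_self_right (le_of_lt hxy)
    rwa [Nat.Coprime, this]
  have hgcd : Nat.gcd (2 * r) (s - r) = d * Nat.gcd 2 (y - x) := by
    have h1 : 2 * r = (2 * x) * d := by rw [hrx]; ring
    have h2 : s - r = (y - x) * d := by
      rw [hrx, hsy, Nat.sub_mul, Nat.mul_comm d y, Nat.mul_comm d x]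
    have h3 : Nat.gcd (2 * x) (y - x) = Nat.gcd 2 (y - x) :=
      Nat.Coprime.gcd_mul_right_cancel 2 hco'
    rw [h1, h2, Nat.gcd_mul_right, h3, Nat.mul_comm]
  -- padicValNat computation
  have hsum : r + s = d * (x + y) := by rw [hrx, hsy]; ring
  have hxy0 : x + y ≠ 0 := by omega
  have hval : padicValNat 2 (r + s) = padicValNat 2 d + padicValNat 2 (x + y) := by
    rw [hsum]; exact padicValNat.mul (by omega) hxy0
  have hvz : padicValNat 2 (x + y) = 0 ↔ ¬ 2 ∣ (x + y) := by
    constructor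
    · intro h h2
      have := (padicValNat.eq_zero_iff (p := 2) (n := x + y)).1 h
      rcases this with h' | h' | h' <;> omega
    · intro h; exact padicValNat.eq_zero_of_not_dvd h
  have hpar : (2 ∣ (y - x)) ↔ (2 ∣ (x + y)) := by omega
  rcases Nat.eq_zero_or_pos ((y - x) % 2) with hpe | hpo
  · -- y - x even, gcd 2 (y-x) = 2
    have h2dvd : 2 ∣ (y - x) := Nat.dvd_of_mod_eq_zero hpe
    have : Nat.gcd 2 (y - x) = 2 := Nat.gcd_eq_left h2dvd
    rw [this] at hgcd
    constructor
    · right; omega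
    · constructor
      · intro h; omega
      · intro h
        exfalso
        have : padicValNat 2 (x + y) = 0 := by omega
        exact (hvz.1 this) (hpar.1 h2dvd)
  · -- y - x odd, gcd 2 (y-x) = 1
    have hnd : ¬ 2 ∣ (y - x) := by omega
    have h1 : Nat.gcd 2 (y - x) = 1 := by
      have hle : Nat.gcd 2 (y - x) ∣ 2 := Nat.gcd_dvd_left _ _
      rcases (Nat.dvd_prime Nat.prime_two).1 hle with h | h
      · exact h
      · exact absurd (h ▸ Nat.gcd_dvd_right 2 (y - x)) hnd
    rw [h1, Nat.mul_one] at hgcd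
    have hvz0 : padicValNat 2 (x + y) = 0 := hvz.2 (fun h => hnd (hpar.2 h))
    constructor
    · left; exact hgcd
    · constructor
      · intro _; omega
      · intro _; exact hgcd

theorem omega_gcd (r s : ℕ) (hr : 0 < r) (hs : 0 < s) (hne : r ≠ s)
    (r' s' : ℕ) (hr' : r' = 2 * r % (r + s)) (hs' : s' = 2 * s % (r + s)) :
    (Nat.gcd r' s' = Nat.gcd r s ∨ Nat.gcd r' s' = 2 * Nat.gcd r s) ∧
      (Nat.gcd r' s' = Nat.gcd r s ↔
        padicValNat 2 (r + s) = padicValNat 2 (Nat.gcd r s)) := by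
  rcases Nat.lt_or_ge r s with hlt | hge
  · have h1 : r' = 2 * r := by rw [hr']; exact Nat.mod_eq_of_lt (by omega)
    have h2 : s' = s - r := by
      rw [hs', Nat.mod_eq_sub_mod (by omega)]
      have : 2 * s - (r + s) = s - r := by omega
      rw [this, Nat.mod_eq_of_lt (by omega)]
    rw [h1, h2]
    exact omega_gcd_key r s hr hlt
  · have hlt : s < r := by omega
    have h1 : s' = 2 * s := by rw [hs']; exact Nat.mod_eq_of_lt (by omega)
    have h2 : r' = r - s := by
      rw [hr', Nat.mod_eq_sub_mod (by omega)]
      have : 2 * r - (r + s) = r - s := by omega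
      rw [this, Nat.mod_eq_of_lt (by omega)]
    rw [h1, h2, Nat.gcd_comm, Nat.gcd_comm r s, Nat.add_comm r s]
    exact omega_gcd_key s r hs hlt
end

section
/- If (a,b) lies in the orbit O(r,s) of (r,s) under the maps α, β, γ, δ, then gcd(a,b)/gcd(r,s) is a (possibly negative) power of 2, i.e., there is m ∈ ℤ with gcd(a,b) = 2^m · gcd(r,s) as rational numbers. -/
/-- One application of an alternative-law map on pairs of positive integers:
`α(r,s) = (2r, s-r)` for `s > r`, `β(r,s) = (r-s, 2s)` for `r > s`,
`γ(r,s) = (r/2, s + r/2)` for `r` even, `δ(r,s) = (r + s/2, s/2)` for `s` even. -/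
def AltStep (p q : ℕ × ℕ) : Prop :=
  (p.1 < p.2 ∧ q = (2 * p.1, p.2 - p.1)) ∨
  (p.2 < p.1 ∧ q = (p.1 - p.2, 2 * p.2)) ∨
  (∃ t, p.1 = 2 * t ∧ q = (t, p.2 + t)) ∨
  (∃ t, p.2 = 2 * t ∧ q = (p.1 + t, t))

/-- `q` belongs to the orbit `O(p)`. -/
def InOrbit (p q : ℕ × ℕ) : Prop := Relation.ReflTransGen AltStep p q

/-! Each of the four maps leaves `gcd` unchanged or multiplies or divides it by `2`: up to
the shear `(x, x + z) ↦ (x, z)`, which preserves `gcd`, it doubles one coordinate, and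
`gcd x z ∣ gcd (2x) z ∣ 2 gcd x z`. Hence the ratio of `gcd`s along an orbit is a power
of `2`. -/

def PowTwoEquiv (x y : ℕ) : Prop := ∃ m : ℤ, (x : ℚ) = 2 ^ m * y

namespace PowTwoEquiv

theorem refl (x : ℕ) : PowTwoEquiv x x := ⟨0, by simp⟩

theorem symm {x y : ℕ} (h : PowTwoEquiv x y) : PowTwoEquiv y x := by
  obtain ⟨m, hm⟩ := h
  exact ⟨-m, by rw [hm, zpow_neg, inv_mul_cancel_left₀ (zpow_ne_zero m two_ne_zero)]⟩

theorem trans {x y z : ℕ} (hxy : PowTwoEquiv x y) (hyz : PowTwoEquiv y z) : PowTwoEquiv x z := by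
  obtain ⟨m, hm⟩ := hxy
  obtain ⟨n, hn⟩ := hyz
  exact ⟨m + n, by rw [hm, hn, zpow_add₀ (by norm_num), mul_assoc]⟩

theorem of_dvd_of_dvd_two_mul {x y : ℕ} (hyx : y ∣ x) (hx : x ∣ 2 * y) : PowTwoEquiv x y := by
  obtain ⟨k, rfl⟩ := hyx
  rcases Nat.eq_zero_or_pos y with rfl | hy
  · simpa using refl 0
  have hk : k ∣ 2 := Nat.dvd_of_mul_dvd_mul_left hy (by simpa [mul_comm] using hx)
  rcases (Nat.dvd_prime Nat.prime_two).1 hk with rfl | rfl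
  · exact ⟨0, by simp⟩
  · exact ⟨1, by push_cast; ring⟩

end PowTwoEquiv

theorem powTwoEquiv_gcd_two_mul_left (x z : ℕ) :
    PowTwoEquiv (Nat.gcd (2 * x) z) (Nat.gcd x z) := by
  refine .of_dvd_of_dvd_two_mul (Nat.gcd_dvd_gcd_of_dvd_left z (dvd_mul_left x 2)) ?_
  rw [← Nat.gcd_mul_left]
  exact Nat.gcd_dvd_gcd_mul_left_right _ _ _

theorem powTwoEquiv_gcd_of_altStep {p q : ℕ × ℕ} (h : AltStep p q) :
    PowTwoEquiv (Nat.gcd q.1 q.2) (Nat.gcd p.1 p.2) := by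
  obtain ⟨x, y⟩ := p
  rcases h with ⟨hxy, rfl⟩ | ⟨hyx, rfl⟩ | ⟨t, rfl, rfl⟩ | ⟨t, rfl, rfl⟩
  · dsimp only at hxy
    obtain ⟨z, rfl⟩ := Nat.exists_eq_add_of_le hxy.le
    simpa [Nat.gcd_self_add_right] using powTwoEquiv_gcd_two_mul_left x z
  · dsimp only at hyx
    obtain ⟨z, rfl⟩ := Nat.exists_eq_add_of_le hyx.le
    simpa [Nat.gcd_comm, Nat.gcd_self_add_right] using powTwoEquiv_gcd_two_mul_left y z
  · simpa [Nat.gcd_add_self_right] using (powTwoEquiv_gcd_two_mul_left t y).symm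
  · simpa [Nat.gcd_comm, Nat.gcd_add_self_right] using (powTwoEquiv_gcd_two_mul_left t x).symm

theorem orbit_gcd_pow_two_general (r s a b : ℕ)
    (h : InOrbit (r, s) (a, b)) :
    ∃ m : ℤ, (Nat.gcd a b : ℚ) = 2 ^ m * (Nat.gcd r s : ℚ) := by
  suffices ∀ q, InOrbit (r, s) q → PowTwoEquiv (Nat.gcd q.1 q.2) (Nat.gcd r s) from this _ h
  intro q hq
  induction hq with
  | refl => exact .refl _
  | tail _ hstep ih => exact (powTwoEquiv_gcd_of_altStep hstep).trans ih

theorem orbit_gcd_pow_two (r s a b : ℕ) (hr : 0 < r) (hs : 0 < s)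
    (h : InOrbit (r, s) (a, b)) :
    ∃ m : ℤ, (Nat.gcd a b : ℚ) = 2 ^ m * (Nat.gcd r s : ℚ) :=
  orbit_gcd_pow_two_general r s a b h
end

section
/- Let r, s be positive integers with n = r + s even and g = gcd(r,s) odd. Then (r,s) has no ω-preimage: there is no pair of positive integers (r',s') with r' ≠ s' and ω(r',s') = (r,s). -/
theorem no_omega_preimage_of_even_sum_odd_gcd (r s : ℕ) (hr : 0 < r) (hs : 0 < s)
    (hn : Even (r + s)) (hg : Odd (Nat.gcd r s)) :
    ¬ ∃ r' s' : ℕ, 0 < r' ∧ 0 < s' ∧ r' ≠ s' ∧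
      (2 * r' % (r' + s'), 2 * s' % (r' + s')) = (r, s) := by
  rintro ⟨r', s', hr', hs', hne, heq⟩
  rw [Prod.mk.injEq] at heq
  obtain ⟨h1, h2⟩ := heq
  have key : Even r ∧ Even s := by
    rcases lt_or_gt_of_ne hne with h | h
    · have : 2 * r' < r' + s' := by omega
      have hre : r = 2 * r' := by rw [← h1, Nat.mod_eq_of_lt this]
      have her : Even r := ⟨r', by omega⟩
      exact ⟨her, ((Nat.even_add.mp hn).mp her)⟩
    · have : 2 * s' < r' + s' := by omega
      have hse : s = 2 * s' := by rw [← h2, Nat.mod_eq_of_lt this]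
      have hes : Even s := ⟨s', by omega⟩
      exact ⟨(Nat.even_add.mp hn).mpr hes, hes⟩
  have : 2 ∣ Nat.gcd r s := Nat.dvd_gcd key.1.two_dvd key.2.two_dvd
  exact (Nat.not_odd_iff_even.mpr (even_iff_two_dvd.mpr this)) hg
end

section
/- Let r, s be positive integers with n = r + s odd and g = gcd(r,s) (necessarily odd). Then (r,s) has exactly one ω-preimage (r',s') among pairs of distinct positive integers summing to n, and gcd(r',s') = g. -/
private lemma two_mul_mod_cases (n a r : ℕ) (h : 2 * a % n = r) (ha : a < n) (hn : 0 < n) :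
    2 * a = r ∨ 2 * a = r + n := by
  have h1 := Nat.div_add_mod (2 * a) n
  have h2 : 2 * a / n < 2 := Nat.div_lt_of_lt_mul (by omega)
  obtain hq | hq : 2 * a / n = 0 ∨ 2 * a / n = 1 := by interval_cases h : 2 * a / n <;> simp
  · rw [hq] at h1; simp at h1; omega
  · rw [hq] at h1; simp at h1; omega

theorem unique_omega_preimage_of_odd_sum (r s : ℕ) (hr : 0 < r) (hs : 0 < s)
    (hn : Odd (r + s)) :
    (∃! p : ℕ × ℕ, 0 < p.1 ∧ 0 < p.2 ∧ p.1 ≠ p.2 ∧ p.1 + p.2 = r + s ∧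
        (2 * p.1 % (p.1 + p.2), 2 * p.2 % (p.1 + p.2)) = (r, s)) ∧
      ∀ p : ℕ × ℕ, 0 < p.1 → 0 < p.2 → p.1 ≠ p.2 → p.1 + p.2 = r + s →
        (2 * p.1 % (p.1 + p.2), 2 * p.2 % (p.1 + p.2)) = (r, s) →
        Nat.gcd p.1 p.2 = Nat.gcd r s := by
  set n := r + s with hndef
  obtain ⟨k, hk⟩ := hn
  -- determine p.1 for any preimage p
  have key : ∀ p : ℕ × ℕ, 0 < p.1 → 0 < p.2 → p.1 ≠ p.2 → p.1 + p.2 = n →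
      (2 * p.1 % (p.1 + p.2), 2 * p.2 % (p.1 + p.2)) = (r, s) →
      (Even r ∧ p = (r / 2, r / 2 + s)) ∨ (Odd r ∧ p = (r + s / 2, s / 2)) := by
    rintro ⟨a, b⟩ ha hb hab hsum heq
    simp only [Prod.mk.injEq] at heq
    obtain ⟨h1, h2⟩ := heq
    rw [hsum] at h1 h2
    have hd1 := two_mul_mod_cases n a r h1 (by omega) (by omega)
    rcases Nat.even_or_odd r with he | ho
    · left
      refine ⟨he, ?_⟩
      obtain ⟨m, hm⟩ := he
      have : 2 * a = r := by
        rcases hd1 with h | h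
        · exact h
        · omega
      simp only [Prod.mk.injEq]
      omega
    · right
      refine ⟨ho, ?_⟩
      obtain ⟨m, hm⟩ := ho
      have : 2 * a = r + n := by
        rcases hd1 with h | h
        · omega
        · exact h
      simp only [Prod.mk.injEq]
      omega
  rcases Nat.even_or_odd r with he | ho
  · -- r even, s odd
    obtain ⟨m, hm⟩ := he
    have hso : Odd s := by
      rcases Nat.even_or_odd s with ⟨j, hj⟩ | h
      · omega
      · exact h
    have hwit : 0 < (r / 2, r / 2 + s).1 ∧ 0 < (r / 2, r / 2 + s).2 ∧
        (r / 2, r / 2 + s).1 ≠ (r / 2, r / 2 + s).2 ∧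
        (r / 2, r / 2 + s).1 + (r / 2, r / 2 + s).2 = r + s ∧
        (2 * (r / 2, r / 2 + s).1 % ((r / 2, r / 2 + s).1 + (r / 2, r / 2 + s).2),
          2 * (r / 2, r / 2 + s).2 % ((r / 2, r / 2 + s).1 + (r / 2, r / 2 + s).2)) = (r, s) := by
      refine ⟨by omega, by omega, by omega, by omega, ?_⟩
      simp only [Prod.mk.injEq]
      constructor
      · have : 2 * (r / 2) = r := by omega
        rw [this]
        have hsum : r / 2 + (r / 2 + s) = r + s := by omega
        rw [hsum]
        exact Nat.mod_eq_of_lt (by omega)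
      · have hsum : r / 2 + (r / 2 + s) = r + s := by omega
        rw [hsum]
        have : 2 * (r / 2 + s) = s + (r + s) := by omega
        rw [this, Nat.add_mod_right]
        exact Nat.mod_eq_of_lt (by omega)
    have hgcd : Nat.gcd (r / 2) (r / 2 + s) = Nat.gcd r s := by
      have h1 : Nat.gcd (r / 2) (r / 2 + s) = Nat.gcd (r / 2) s := by
        rw [Nat.gcd_self_add_right]
      rw [h1]
      have hco : Nat.Coprime 2 s := Nat.coprime_two_left.mpr hso
      calc Nat.gcd (r / 2) s = Nat.gcd (2 * (r / 2)) s := (hco.gcd_mul_left_cancel _).symm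
        _ = Nat.gcd r s := by congr 1; omega
    constructor
    · refine ⟨(r / 2, r / 2 + s), hwit, ?_⟩
      intro p hp
      obtain ⟨hp1, hp2, hp3, hp4, hp5⟩ := hp
      rcases key p hp1 hp2 hp3 hp4 hp5 with ⟨_, h⟩ | ⟨ho, _⟩
      · exact h
      · obtain ⟨j, hj⟩ := ho; omega
    · intro p hp1 hp2 hp3 hp4 hp5
      rcases key p hp1 hp2 hp3 hp4 hp5 with ⟨_, h⟩ | ⟨ho, _⟩
      · rw [h]; exact hgcd
      · obtain ⟨j, hj⟩ := ho; omega
  · -- r odd, s even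
    have hse : Even s := by
      rcases Nat.even_or_odd s with h | ⟨j, hj⟩
      · exact h
      · obtain ⟨m, hm⟩ := ho; omega
    obtain ⟨m, hm⟩ := hse
    have hwit : 0 < (r + s / 2, s / 2).1 ∧ 0 < (r + s / 2, s / 2).2 ∧
        (r + s / 2, s / 2).1 ≠ (r + s / 2, s / 2).2 ∧
        (r + s / 2, s / 2).1 + (r + s / 2, s / 2).2 = r + s ∧
        (2 * (r + s / 2, s / 2).1 % ((r + s / 2, s / 2).1 + (r + s / 2, s / 2).2),
          2 * (r + s / 2, s / 2).2 % ((r + s / 2, s / 2).1 + (r + s / 2, s / 2).2)) = (r, s) := by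
      refine ⟨by omega, by omega, by omega, by omega, ?_⟩
      simp only [Prod.mk.injEq]
      have hsum : r + s / 2 + s / 2 = r + s := by omega
      rw [hsum]
      constructor
      · have : 2 * (r + s / 2) = r + (r + s) := by omega
        rw [this, Nat.add_mod_right]
        exact Nat.mod_eq_of_lt (by omega)
      · have : 2 * (s / 2) = s := by omega
        rw [this]
        exact Nat.mod_eq_of_lt (by omega)
    have hgcd : Nat.gcd (r + s / 2) (s / 2) = Nat.gcd r s := by
      have h1 : Nat.gcd (r + s / 2) (s / 2) = Nat.gcd r (s / 2) := by
        rw [Nat.gcd_add_self_left]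
      rw [h1]
      have hco : Nat.Coprime 2 r := Nat.coprime_two_left.mpr ho
      calc Nat.gcd r (s / 2) = Nat.gcd (s / 2) r := Nat.gcd_comm _ _
        _ = Nat.gcd (2 * (s / 2)) r := (hco.gcd_mul_left_cancel _).symm
        _ = Nat.gcd s r := by congr 1; omega
        _ = Nat.gcd r s := Nat.gcd_comm _ _
    constructor
    · refine ⟨(r + s / 2, s / 2), hwit, ?_⟩
      intro p hp
      obtain ⟨hp1, hp2, hp3, hp4, hp5⟩ := hp
      rcases key p hp1 hp2 hp3 hp4 hp5 with ⟨he, _⟩ | ⟨_, h⟩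
      · obtain ⟨j, hj⟩ := he; obtain ⟨i, hi⟩ := ho; omega
      · exact h
    · intro p hp1 hp2 hp3 hp4 hp5
      rcases key p hp1 hp2 hp3 hp4 hp5 with ⟨he, _⟩ | ⟨_, h⟩
      · obtain ⟨j, hj⟩ := he; obtain ⟨i, hi⟩ := ho; omega
      · rw [h]; exact hgcd
end

section
/- Let r, s be positive integers with gcd(r,s) even. Then (r,s) has exactly two ω-preimages among pairs of positive integers summing to r+s, namely γ(r,s)=(r/2, s+r/2) and δ(r,s)=(r+s/2, s/2), and these two pairs are distinct. -/
theorem two_omega_preimages_of_even_gcd (r s : ℕ) (hr : 0 < r) (hs : 0 < s)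
    (hg : Even (Nat.gcd r s)) :
    ((r / 2, s + r / 2) : ℕ × ℕ) ≠ (r + s / 2, s / 2) ∧
      ∀ p : ℕ × ℕ,
        (0 < p.1 ∧ 0 < p.2 ∧ p.1 ≠ p.2 ∧ p.1 + p.2 = r + s ∧
            (2 * p.1 % (p.1 + p.2), 2 * p.2 % (p.1 + p.2)) = (r, s)) ↔
          (p = (r / 2, s + r / 2) ∨ p = (r + s / 2, s / 2)) := by
  have h2r : 2 ∣ r := hg.two_dvd.trans (Nat.gcd_dvd_left r s)
  have h2s : 2 ∣ s := hg.two_dvd.trans (Nat.gcd_dvd_right r s)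
  obtain ⟨a, ha⟩ := h2r
  obtain ⟨b, hb⟩ := h2s
  subst ha hb
  constructor
  · simp only [ne_eq, Prod.mk.injEq, not_and]
    intro h
    omega
  · rintro ⟨x, y⟩
    simp only [Prod.mk.injEq]
    constructor
    · rintro ⟨hx, hy, hne, hsum, hmod⟩
      have h1 : 2 * x % (x + y) = 2 * a := hmod.1
      rcases Nat.lt_or_ge (2 * x) (x + y) with hc | hc
      · rw [Nat.mod_eq_of_lt hc] at h1
        left; omega
      · have hne2 : 2 * x ≠ x + y := by omega
        rw [Nat.mod_eq_sub_mod hc, Nat.mod_eq_of_lt (by omega)] at h1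
        right; omega
    · rintro (⟨hx, hy⟩ | ⟨hx, hy⟩)
      · refine ⟨by omega, by omega, by omega, by omega, ?_⟩
        have hn : x + y = 2 * a + 2 * b := by omega
        have h1 : 2 * x = 2 * a := by omega
        have h2 : 2 * y = (2 * a + 2 * b) + 2 * b := by omega
        rw [hn, h1, h2, Nat.add_mod_left, Nat.mod_eq_of_lt (by omega),
          Nat.mod_eq_of_lt (by omega)]
        exact ⟨rfl, rfl⟩
      · refine ⟨by omega, by omega, by omega, by omega, ?_⟩
        have hn : x + y = 2 * a + 2 * b := by omega
        have h1 : 2 * x = (2 * a + 2 * b) + 2 * a := by omega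
        have h2 : 2 * y = 2 * b := by omega
        rw [hn, h1, h2, Nat.add_mod_left, Nat.mod_eq_of_lt (by omega),
          Nat.mod_eq_of_lt (by omega)]
        exact ⟨rfl, rfl⟩
end

section
/- If r + s is odd, then the orbit O(r,s) equals {(2^k r mod (r+s), 2^k s mod (r+s)) : k ≥ 0}, and every element of the orbit can be mapped back to (r,s) by further applications of ω; in particular O(r,s) is a single directed cycle under ω. -/
/-- The map `ω(r,s) = (2r mod (r+s), 2s mod (r+s))`. -/
def omegaMap (p : ℕ × ℕ) : ℕ × ℕ := (2 * p.1 % (p.1 + p.2), 2 * p.2 % (p.1 + p.2))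

namespace OrbitAux

lemma coprime_two {n : ℕ} (hn : Odd n) : Nat.Coprime 2 n :=
  Nat.prime_two.coprime_iff_not_dvd.mpr (by rw [Nat.odd_iff] at hn; omega)

lemma two_mul_mod_pos {n : ℕ} (hn : Odd n) {x : ℕ} (hx : 0 < x) (hx' : x < n) :
    0 < 2 * x % n := by
  rcases Nat.eq_zero_or_pos (2 * x % n) with h | h
  · exfalso
    have hd : n ∣ 2 * x := Nat.dvd_of_mod_eq_zero h
    have hc : Nat.Coprime n 2 := (coprime_two hn).symm
    have : n ∣ x := hc.dvd_of_dvd_mul_left hd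
    have := Nat.le_of_dvd hx this
    omega
  · exact h

lemma two_mul_mod (x n : ℕ) : 2 * (x % n) % n = 2 * x % n := by
  conv_rhs => rw [Nat.mul_mod]
  rw [Nat.mul_mod, Nat.mod_mod_of_dvd _ dvd_rfl]

lemma good_omega {n : ℕ} (hn : Odd n) {a b : ℕ} (hab : a + b = n) (ha : 0 < a) (hb : 0 < b) :
    omegaMap (a, b) = (2 * a % n, 2 * b % n) ∧ 2 * a % n + 2 * b % n = n ∧
      0 < 2 * a % n ∧ 0 < 2 * b % n := by
  have h1 : 1 < n := by omega
  have e : omegaMap (a, b) = (2 * a % n, 2 * b % n) := by simp [omegaMap, hab]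
  have pa : 0 < 2 * a % n := two_mul_mod_pos hn ha (by omega)
  have pb : 0 < 2 * b % n := two_mul_mod_pos hn hb (by omega)
  have la : 2 * a % n < n := Nat.mod_lt _ (by omega)
  have lb : 2 * b % n < n := Nat.mod_lt _ (by omega)
  have hsum : (2 * a % n + 2 * b % n) % n = 0 := by
    rw [← Nat.add_mod]
    have h2 : 2 * a + 2 * b = 2 * n := by omega
    rw [h2]
    exact Nat.mul_mod_left 2 n
  refine ⟨e, ?_, pa, pb⟩
  rcases lt_or_ge (2 * a % n + 2 * b % n) n with h | h
  · rw [Nat.mod_eq_of_lt h] at hsum; omega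
  · rw [Nat.mod_eq_sub_mod h, Nat.mod_eq_of_lt (by omega)] at hsum; omega

lemma iter_good {n : ℕ} (hn : Odd n) {a b : ℕ} (hab : a + b = n) (ha : 0 < a) (hb : 0 < b)
    (k : ℕ) :
    omegaMap^[k] (a, b) = (2 ^ k * a % n, 2 ^ k * b % n) ∧
      2 ^ k * a % n + 2 ^ k * b % n = n ∧ 0 < 2 ^ k * a % n ∧ 0 < 2 ^ k * b % n := by
  induction k with
  | zero =>
      simp only [Function.iterate_zero, id_eq, pow_zero, one_mul]
      rw [Nat.mod_eq_of_lt (by omega : a < n), Nat.mod_eq_of_lt (by omega : b < n)]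
      exact ⟨rfl, hab, ha, hb⟩
  | succ k ih =>
      obtain ⟨he, hs, hpa, hpb⟩ := ih
      obtain ⟨he', hs', hpa', hpb'⟩ := good_omega hn hs hpa hpb
      have m1 : 2 * (2 ^ k * a % n) % n = 2 ^ (k + 1) * a % n := by
        rw [two_mul_mod]; ring_nf
      have m2 : 2 * (2 ^ k * b % n) % n = 2 ^ (k + 1) * b % n := by
        rw [two_mul_mod]; ring_nf
      rw [m1] at he' hs' hpa'
      rw [m2] at he' hs' hpb'
      refine ⟨?_, hs', hpa', hpb'⟩
      rw [Function.iterate_succ_apply', he, he']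

lemma omega_eq_of_lt {n a b : ℕ} (hab : a + b = n) (ha : 0 < a) (h : a < b) :
    omegaMap (a, b) = (2 * a, b - a) := by
  have e1 : 2 * a % n = 2 * a := Nat.mod_eq_of_lt (by omega)
  have e2 : 2 * b % n = b - a := by
    rw [Nat.mod_eq_sub_mod (by omega : n ≤ 2 * b)]
    have h3 : 2 * b - n = b - a := by omega
    rw [h3, Nat.mod_eq_of_lt (by omega)]
  simp [omegaMap, hab, e1, e2]

lemma omega_eq_of_gt {n a b : ℕ} (hab : a + b = n) (hb : 0 < b) (h : b < a) :
    omegaMap (a, b) = (a - b, 2 * b) := by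
  have e2 : 2 * b % n = 2 * b := Nat.mod_eq_of_lt (by omega)
  have e1 : 2 * a % n = a - b := by
    rw [Nat.mod_eq_sub_mod (by omega : n ≤ 2 * a)]
    have h3 : 2 * a - n = a - b := by omega
    rw [h3, Nat.mod_eq_of_lt (by omega)]
  simp [omegaMap, hab, e1, e2]

lemma ne_of_odd {n a b : ℕ} (hn : Odd n) (hab : a + b = n) : a ≠ b := by
  rintro rfl
  rcases hn with ⟨k, hk⟩
  omega

lemma altstep_omega {n : ℕ} (hn : Odd n) {a b : ℕ} (hab : a + b = n) (ha : 0 < a) (hb : 0 < b) :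
    AltStep (a, b) (omegaMap (a, b)) := by
  rcases lt_trichotomy a b with h | h | h
  · exact Or.inl ⟨h, (omega_eq_of_lt hab ha h)⟩
  · exact absurd h (ne_of_odd hn hab)
  · exact Or.inr (Or.inl ⟨h, (omega_eq_of_gt hab hb h)⟩)

lemma altstep_cases {n : ℕ} (hn : Odd n) {a b : ℕ} {q : ℕ × ℕ}
    (hab : a + b = n) (ha : 0 < a) (hb : 0 < b) (h : AltStep (a, b) q) :
    q = omegaMap (a, b) ∨
      (q.1 + q.2 = n ∧ 0 < q.1 ∧ 0 < q.2 ∧ omegaMap q = (a, b)) := by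
  rcases h with ⟨h, rfl⟩ | ⟨h, rfl⟩ | ⟨t, ht, rfl⟩ | ⟨t, ht, rfl⟩
  · left; rw [omega_eq_of_lt hab ha h]
  · left; rw [omega_eq_of_gt hab hb h]
  · right
    simp only at ht ⊢
    refine ⟨by omega, by omega, by omega, ?_⟩
    rw [omega_eq_of_lt (by omega : t + (b + t) = n) (by omega : 0 < t) (by omega : t < b + t)]
    have : 2 * t = a := by omega
    simp [this]
  · right
    simp only at ht ⊢
    refine ⟨by omega, by omega, by omega, ?_⟩
    rw [omega_eq_of_gt (by omega : (a + t) + t = n) (by omega : 0 < t) (by omega : t < a + t)]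
    have : 2 * t = b := by omega
    simp [this]

lemma period_one {n : ℕ} (hn : Odd n) {a b : ℕ} (hab : a + b = n) (ha : 0 < a) (hb : 0 < b) :
    omegaMap^[n.totient] (a, b) = (a, b) := by
  have h1 : 1 < n := by omega
  have hpow : 2 ^ n.totient % n = 1 := by
    have := Nat.ModEq.pow_totient (coprime_two hn)
    unfold Nat.ModEq at this
    rwa [Nat.one_mod_eq_one.mpr (by omega)] at this
  have ea : 2 ^ n.totient * a % n = a := by
    rw [Nat.mul_mod, hpow, one_mul, Nat.mod_mod_of_dvd _ dvd_rfl,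
      Nat.mod_eq_of_lt (by omega)]
  have eb : 2 ^ n.totient * b % n = b := by
    rw [Nat.mul_mod, hpow, one_mul, Nat.mod_mod_of_dvd _ dvd_rfl,
      Nat.mod_eq_of_lt (by omega)]
  rw [(iter_good hn hab ha hb n.totient).1, ea, eb]

lemma period_mul {n : ℕ} (hn : Odd n) {a b : ℕ} (hab : a + b = n) (ha : 0 < a) (hb : 0 < b)
    (t : ℕ) : omegaMap^[n.totient * t] (a, b) = (a, b) := by
  induction t with
  | zero => simp
  | succ t ih =>
      rw [Nat.mul_succ, Function.iterate_add_apply, period_one hn hab ha hb, ih]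

end OrbitAux

open OrbitAux

theorem orbit_of_odd_sum (r s : ℕ) (hr : 0 < r) (hs : 0 < s) (hn : Odd (r + s)) :
    (∀ p : ℕ × ℕ, InOrbit (r, s) p ↔
        ∃ k : ℕ, p = (2 ^ k * r % (r + s), 2 ^ k * s % (r + s))) ∧
      ∀ p : ℕ × ℕ, InOrbit (r, s) p → ∃ m : ℕ, omegaMap^[m] p = (r, s) := by
  set n := r + s with hn'
  have hab : r + s = n := rfl
  have hF0 : ((2 : ℕ) ^ 0 * r % n, 2 ^ 0 * s % n) = (r, s) := by
    simp only [pow_zero, one_mul]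
    rw [Nat.mod_eq_of_lt (by omega), Nat.mod_eq_of_lt (by omega)]
  have hm : 0 < n.totient := Nat.totient_pos.mpr (by omega)
  -- forward: orbit elements are powers
  have fwd : ∀ p : ℕ × ℕ, InOrbit (r, s) p →
      ∃ k : ℕ, p = (2 ^ k * r % n, 2 ^ k * s % n) := by
    intro p h
    induction h with
    | refl => exact ⟨0, hF0.symm⟩
    | @tail pmid q hb step ih =>
        obtain ⟨k, rfl⟩ := ih
        obtain ⟨-, hsk, hpak, hpbk⟩ := iter_good hn hab hr hs k
        rcases altstep_cases hn hsk hpak hpbk step with h | ⟨hq, hq1, hq2, hq3⟩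
        · refine ⟨k + 1, ?_⟩
          have e1 := (iter_good hn hab hr hs k).1
          have e2 := (iter_good hn hab hr hs (k + 1)).1
          rw [h, ← e1, ← Function.iterate_succ_apply' omegaMap k (r, s), e2]
        · -- omegaMap q = F k; then q = omegaMap^[totient-1] (F k)
          refine ⟨n.totient - 1 + k, ?_⟩
          have hq' : (q.1, q.2) = q := rfl
          have hper : omegaMap^[n.totient] q = q := by
            rw [← hq']; exact period_one hn hq hq1 hq2
          have hsucc : n.totient - 1 + 1 = n.totient := by omega
          have e1 := (iter_good hn hab hr hs k).1
          have e2 := (iter_good hn hab hr hs (n.totient - 1 + k)).1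
          calc q = omegaMap^[n.totient] q := hper.symm
            _ = omegaMap^[n.totient - 1] (omegaMap q) := by
                rw [← Function.iterate_succ_apply omegaMap (n.totient - 1) q]
                congr 1
                omega
            _ = omegaMap^[n.totient - 1] (omegaMap^[k] (r, s)) := by rw [hq3, e1]
            _ = omegaMap^[n.totient - 1 + k] (r, s) := by
                rw [Function.iterate_add_apply]
            _ = _ := e2
  refine ⟨fun p => ⟨fwd p, ?_⟩, ?_⟩
  · rintro ⟨k, rfl⟩
    induction k with
    | zero => rw [hF0]; exact Relation.ReflTransGen.refl
    | succ k ih =>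
        refine Relation.ReflTransGen.tail ih ?_
        obtain ⟨ek, hsk, hpak, hpbk⟩ := iter_good hn hab hr hs k
        have step := altstep_omega hn hsk hpak hpbk
        have e2 := (iter_good hn hab hr hs (k + 1)).1
        have : omegaMap (2 ^ k * r % n, 2 ^ k * s % n) =
            (2 ^ (k + 1) * r % n, 2 ^ (k + 1) * s % n) := by
          rw [← ek, ← Function.iterate_succ_apply' omegaMap k (r, s), e2]
        rwa [this] at step
  · intro p hp
    obtain ⟨k, rfl⟩ := fwd p hp
    refine ⟨n.totient * (k + 1) - k, ?_⟩
    have hle : k + 1 ≤ n.totient * (k + 1) := Nat.le_mul_of_pos_left _ hm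
    have e1 := (iter_good hn hab hr hs k).1
    have hsum : n.totient * (k + 1) - k + k = n.totient * (k + 1) := by omega
    rw [← e1, ← Function.iterate_add_apply, hsum, period_mul hn hab hr hs]
end

section
/- If n = 2^m with m ≥ 1, then the orbit of (1, n−1) under the maps α, β, γ, δ contains every pair (a,b) of positive integers with a + b = n; that is, n is complete. -/
/-!
On pairs `(a, b)` with `a + b = 2N`, the maps `α` and `β` act on the first coordinate as
doubling modulo `2N`, and `γ`, `δ` undo them. Iterating the doubling sends every `a` with
`N ∣ 2^k a` to `N`, so every such pair is linked in both directions to the diagonal pair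
`(N, N)`. For `2N = 2^m` every `a` qualifies with `k = m - 1`, so all pairs lie in one orbit.
-/

lemma altStep_alpha {r s : ℕ} (h : r < s) : AltStep (r, s) (2 * r, s - r) :=
  Or.inl ⟨h, rfl⟩

lemma altStep_beta {r s : ℕ} (h : s < r) : AltStep (r, s) (r - s, 2 * s) :=
  Or.inr (Or.inl ⟨h, rfl⟩)

lemma altStep_gamma_of_alpha {r s : ℕ} (h : r < s) : AltStep (2 * r, s - r) (r, s) :=
  Or.inr (Or.inr (Or.inl ⟨r, rfl, Prod.ext rfl (by dsimp only; omega)⟩))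

lemma altStep_delta_of_beta {r s : ℕ} (h : s < r) : AltStep (r - s, 2 * s) (r, s) :=
  Or.inr (Or.inr (Or.inr ⟨s, rfl, Prod.ext (by dsimp only; omega) rfl⟩))

lemma inOrbit_diag_and_back_of_dvd (N k : ℕ) :
    ∀ {a b : ℕ}, 0 < a → 0 < b → a + b = 2 * N → N ∣ 2 ^ k * a →
      InOrbit (a, b) (N, N) ∧ InOrbit (N, N) (a, b) := by
  induction k with
  | zero =>
    intro a b ha hb hab hdvd
    obtain ⟨c, rfl⟩ : N ∣ a := by simpa using hdvd
    obtain rfl : c = 1 := by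
      rcases c with _ | _ | c
      · omega
      · rfl
      · nlinarith
    obtain rfl : b = N := by omega
    rw [mul_one]
    exact ⟨.refl, .refl⟩
  | succ k ih =>
    intro a b ha hb hab hdvd
    rcases Nat.lt_trichotomy a b with hlt | rfl | hgt
    · obtain ⟨there, back⟩ := ih (a := 2 * a) (b := b - a) (by omega) (by omega) (by omega)
        (by rwa [← mul_assoc, ← pow_succ])
      exact ⟨.head (altStep_alpha hlt) there, back.tail (altStep_gamma_of_alpha hlt)⟩
    · obtain rfl : a = N := by omega
      exact ⟨.refl, .refl⟩
    · have hsplit : 2 ^ (k + 1) * a = 2 ^ k * (a - b) + N * 2 ^ (k + 1) := by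
        rw [pow_succ]
        zify [hgt.le] at hab ⊢
        linear_combination (2 ^ k : ℤ) * hab
      obtain ⟨there, back⟩ := ih (a := a - b) (b := 2 * b) (by omega) (by omega) (by omega)
        ((Nat.dvd_add_left (dvd_mul_right N _)).mp (hsplit ▸ hdvd))
      exact ⟨.head (altStep_beta hgt) there, back.tail (altStep_delta_of_beta hgt)⟩

theorem pow_two_complete (m : ℕ) (hm : 1 ≤ m) (n : ℕ) (hn : n = 2 ^ m) :
    ∀ a b : ℕ, 0 < a → 0 < b → a + b = n → InOrbit (1, n - 1) (a, b) := by
  intro a b ha hb hab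
  have hnN : n = 2 * 2 ^ (m - 1) := by rw [hn, ← pow_succ', Nat.sub_add_cancel hm]
  have hN : 0 < 2 ^ (m - 1) := by positivity
  have start := (inOrbit_diag_and_back_of_dvd _ (m - 1) (b := n - 1) one_pos (by omega)
    (by omega) (dvd_mul_right _ 1)).1
  exact start.trans (inOrbit_diag_and_back_of_dvd _ (m - 1) ha hb (by omega)
    (dvd_mul_right _ a)).2
end

section
/- Let p be an odd prime. Then p is complete (i.e., the orbit of any (r,s) with r+s=p contains all pairs (a,b) of positive integers with a+b=p) if and only if 2 is a primitive root modulo p. -/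
lemma nat_eq_of_cast_eq {p a b : ℕ} (hp : 0 < p) (ha : a < p) (hb : b < p)
    (h : (a : ZMod p) = (b : ZMod p)) : a = b := by
  haveI : NeZero p := ⟨hp.ne'⟩
  have h2 := congrArg ZMod.val h
  rwa [ZMod.val_cast_of_lt ha, ZMod.val_cast_of_lt hb] at h2

lemma step_double {p m a : ℕ} (hodd : Odd p) (hm : 0 < m) (hmp : m < p)
    (ha : 0 < a) (hap : a < p) (h : (a : ZMod p) = 2 * (m : ZMod p)) :
    AltStep (m, p - m) (a, p - a) := by
  have hp0 : 0 < p := hm.trans hmp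
  haveI : NeZero p := ⟨hp0.ne'⟩
  have hne : 2 * m ≠ p := by
    intro he; rcases hodd with ⟨u, hu⟩; omega
  rcases lt_or_gt_of_ne hne with h2 | h2
  · -- α case
    have hae : a = 2 * m := by
      refine nat_eq_of_cast_eq hp0 hap (by omega) ?_
      rw [h]; push_cast; ring
    left
    refine ⟨by simp only; omega, ?_⟩
    simp only [Prod.mk.injEq]
    omega
  · -- β case
    have hae : a = 2 * m - p := by
      refine nat_eq_of_cast_eq hp0 hap (by omega) ?_
      rw [h, Nat.cast_sub (by omega), ZMod.natCast_self, sub_zero]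
      push_cast; ring
    right; left
    refine ⟨by simp only; omega, ?_⟩
    simp only [Prod.mk.injEq]
    omega

lemma two_ne_zero_zmod {p : ℕ} (hp : p.Prime) (hodd : Odd p) : (2 : ZMod p) ≠ 0 := by
  have hp2 : p ≠ 2 := by rcases hodd with ⟨u, hu⟩; omega
  intro h
  have h2 : ((2 : ℕ) : ZMod p) = 0 := by exact_mod_cast h
  rw [ZMod.natCast_eq_zero_iff] at h2
  exact hp2 ((Nat.prime_dvd_prime_iff_eq hp Nat.prime_two).mp h2)

lemma reach {p : ℕ} (hp : p.Prime) (hodd : Odd p) :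
    ∀ (k r a : ℕ), 0 < r → r < p → 0 < a → a < p →
      (a : ZMod p) = 2 ^ k * (r : ZMod p) → InOrbit (r, p - r) (a, p - a) := by
  haveI : Fact p.Prime := ⟨hp⟩
  haveI : NeZero p := ⟨hp.pos.ne'⟩
  intro k
  induction k with
  | zero =>
    intro r a hr hrp ha hap h
    have : a = r := nat_eq_of_cast_eq hp.pos hap hrp (by simpa using h)
    subst this
    exact Relation.ReflTransGen.refl
  | succ k ih =>
    intro r a hr hrp ha hap h
    set c := ((2 : ZMod p) ^ k * (r : ZMod p)).val with hc
    have hcp : c < p := ZMod.val_lt _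
    have h2ne : (2 : ZMod p) ≠ 0 := two_ne_zero_zmod hp hodd
    have hrne : ((r : ℕ) : ZMod p) ≠ 0 := by
      rw [Ne, ZMod.natCast_eq_zero_iff]
      intro hd
      exact absurd (Nat.le_of_dvd hr hd) (by omega)
    have hval : (2 : ZMod p) ^ k * (r : ZMod p) ≠ 0 :=
      mul_ne_zero (pow_ne_zero _ h2ne) hrne
    have hc0 : 0 < c := by
      rcases Nat.eq_zero_or_pos c with h0 | h0
      · exact absurd ((ZMod.val_eq_zero _).mp h0) hval
      · exact h0
    have hcast : ((c : ℕ) : ZMod p) = (2 : ZMod p) ^ k * (r : ZMod p) :=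
      ZMod.natCast_zmod_val _
    have ih' := ih r c hr hrp hc0 hcp hcast
    have hstep : AltStep (c, p - c) (a, p - a) := by
      refine step_double hodd hc0 hcp ha hap ?_
      rw [h, hcast, pow_succ]; ring
    exact ih'.tail hstep

lemma orbit_invariant {p : ℕ} (hp : p.Prime) (hodd : Odd p) {q : ℕ × ℕ} {r : ℕ}
    (hr : 0 < r) (hrp : r < p) (h : InOrbit (r, p - r) q) :
    q.1 + q.2 = p ∧ 0 < q.1 ∧ ∃ k : ℕ, (q.1 : ZMod p) = 2 ^ k * (r : ZMod p) := by
  haveI : Fact p.Prime := ⟨hp⟩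
  haveI : NeZero p := ⟨hp.pos.ne'⟩
  have h2ne : (2 : ZMod p) ≠ 0 := two_ne_zero_zmod hp hodd
  have hu : IsUnit (2 : ZMod p) := isUnit_iff_ne_zero.mpr h2ne
  set d := orderOf (2 : ZMod p) with hdd
  have hdpos : 0 < d := by
    obtain ⟨u, hu2⟩ := hu
    rw [hdd, ← hu2, orderOf_units]
    exact orderOf_pos u
  have hsucc : d - 1 + 1 = d := Nat.succ_pred_eq_of_pos hdpos
  have hone : (2 : ZMod p) ^ (d - 1) * 2 = 1 := by
    rw [← pow_succ, hsucc]
    exact pow_orderOf_eq_one _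
  -- key halving step
  have half : ∀ x y : ZMod p, 2 * y = x → y = 2 ^ (d - 1) * x := by
    intro x y hxy
    calc y = ((2 : ZMod p) ^ (d - 1) * 2) * y := by rw [hone, one_mul]
      _ = 2 ^ (d - 1) * (2 * y) := by ring
      _ = 2 ^ (d - 1) * x := by rw [hxy]
  induction h with
  | refl => exact ⟨by omega, hr, 0, by simp⟩
  | tail h1 hstep ih =>
    obtain ⟨hsum, hb1, k, hk⟩ := ih
    rename_i b c
    rcases hstep with ⟨hlt, hq⟩ | ⟨hlt, hq⟩ | ⟨t, ht, hq⟩ | ⟨t, ht, hq⟩ <;> subst hq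
    · -- α
      refine ⟨by simp only; omega, by simp only; omega, k + 1, ?_⟩
      simp only
      push_cast
      rw [hk, pow_succ]; ring
    · -- β
      refine ⟨by simp only; omega, by simp only; omega, k + 1, ?_⟩
      simp only
      have he : b.1 - b.2 = 2 * b.1 - p := by omega
      rw [he, Nat.cast_sub (by omega), ZMod.natCast_self, sub_zero]
      push_cast
      rw [hk, pow_succ]; ring
    · -- γ
      refine ⟨by simp only; omega, by simp only; omega, k + (d - 1), ?_⟩
      simp only
      have h2t : 2 * ((t : ℕ) : ZMod p) = (b.1 : ZMod p) := by
        rw [ht]; push_cast; ring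
      rw [half _ _ h2t, hk, pow_add]; ring
    · -- δ
      refine ⟨by simp only; omega, by simp only; omega, k + (d - 1), ?_⟩
      simp only
      have hnat : 2 * (b.1 + t) = b.1 + p := by omega
      have h2x : 2 * (((b.1 + t : ℕ)) : ZMod p) = (b.1 : ZMod p) := by
        have : ((2 * (b.1 + t) : ℕ) : ZMod p) = ((b.1 + p : ℕ) : ZMod p) := by rw [hnat]
        push_cast [ZMod.natCast_self] at this
        push_cast
        simpa using this
      rw [half _ _ h2x, hk, pow_add]; ring

theorem odd_prime_complete_iff_primitive_root (p : ℕ) (hp : p.Prime) (hodd : Odd p) :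
    (∀ r s a b : ℕ, 0 < r → 0 < s → r + s = p → 0 < a → 0 < b → a + b = p →
        InOrbit (r, s) (a, b)) ↔
      orderOf (2 : ZMod p) = p - 1 := by
  haveI : Fact p.Prime := ⟨hp⟩
  haveI : NeZero p := ⟨hp.pos.ne'⟩
  have hp1 : 1 < p := hp.one_lt
  have h2ne : (2 : ZMod p) ≠ 0 := two_ne_zero_zmod hp hodd
  have hu : IsUnit (2 : ZMod p) := isUnit_iff_ne_zero.mpr h2ne
  obtain ⟨u, huval⟩ := hu
  have hcard : Nat.card (ZMod p)ˣ = p - 1 := by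
    rw [Nat.card_eq_fintype_card, ZMod.card_units_eq_totient, Nat.totient_prime hp]
  constructor
  · intro H
    have key : ∀ v : (ZMod p)ˣ, v ∈ Subgroup.zpowers u := by
      intro v
      set a := (v : ZMod p).val with hav
      have hap : a < p := ZMod.val_lt _
      have ha0 : 0 < a := by
        have hvne : (v : ZMod p) ≠ 0 := v.ne_zero
        exact Nat.pos_of_ne_zero fun h0 => hvne ((ZMod.val_eq_zero _).mp h0)
      have horb : InOrbit (1, p - 1) (a, p - a) :=
        H 1 (p - 1) a (p - a) one_pos (by omega) (by omega) ha0 (by omega) (by omega)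
      obtain ⟨-, -, k, hk⟩ := orbit_invariant hp hodd one_pos hp1 horb
      have huk : u ^ k = v := by
        apply Units.ext
        have : ((u ^ k : (ZMod p)ˣ) : ZMod p) = (2 : ZMod p) ^ k := by
          rw [Units.val_pow_eq_pow_val, huval]
        rw [this]
        have hvv : ((a : ℕ) : ZMod p) = (v : ZMod p) := ZMod.natCast_zmod_val _
        rw [← hvv, hk]
        push_cast; ring
      exact Subgroup.mem_zpowers_iff.mpr ⟨(k : ℤ), by rw [zpow_natCast, huk]⟩
    have htop : Subgroup.zpowers u = ⊤ := (Subgroup.eq_top_iff' _).mpr key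
    have hou : orderOf u = p - 1 := by
      rw [← Nat.card_zpowers, htop, ← hcard]
      exact Subgroup.card_top
    rw [← huval, orderOf_units, hou]
  · intro hord r s a b hr hs hrs ha hb hab
    obtain rfl : s = p - r := by omega
    obtain rfl : b = p - a := by omega
    have hrp : r < p := by omega
    have hap : a < p := by omega
    have hou : orderOf u = p - 1 := by rw [← orderOf_units, huval, hord]
    have htop : Subgroup.zpowers u = ⊤ :=
      Subgroup.eq_top_of_card_eq _ (by rw [Nat.card_zpowers, hou, hcard])
    have hane : ((a : ℕ) : ZMod p) ≠ 0 := by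
      rw [Ne, ZMod.natCast_eq_zero_iff]
      intro hd; exact absurd (Nat.le_of_dvd ha hd) (by omega)
    have hrne : ((r : ℕ) : ZMod p) ≠ 0 := by
      rw [Ne, ZMod.natCast_eq_zero_iff]
      intro hd; exact absurd (Nat.le_of_dvd hr hd) (by omega)
    obtain ⟨va, hva⟩ := isUnit_iff_ne_zero.mpr hane
    obtain ⟨vr, hvr⟩ := isUnit_iff_ne_zero.mpr hrne
    have hmem : va * vr⁻¹ ∈ Subgroup.zpowers u := htop ▸ Subgroup.mem_top _
    obtain ⟨k, hk⟩ := (Submonoid.mem_powers_iff _ _).mp (mem_powers_iff_mem_zpowers.mpr hmem)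
    have hk2 : u ^ k * vr = va := by rw [hk]; group
    have hcast : ((a : ℕ) : ZMod p) = 2 ^ k * ((r : ℕ) : ZMod p) := by
      have := congrArg (Units.val) hk2
      rw [Units.val_mul, Units.val_pow_eq_pow_val, huval, hva, hvr] at this
      exact this.symm
    exact reach hp hodd k r a hr hrp ha hap hcast
end

section
/- If n > 0 is neither a power of 2 nor an odd prime, then n is not complete: there exist pairs (1, n−1) and (p, n−p), where p is an odd prime properly dividing n, lying in distinct orbits. -/
/- The maps only double, halve, add or subtract coordinates, so the odd common divisors of a pair
are the same along its whole orbit: `p` divides both entries of `(p, n - p)` but not `1`. -/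
theorem AltStep.dvd_of_dvd {d : ℕ} (hd : Odd d) {x y : ℕ × ℕ} (h : AltStep x y)
    (hy : d ∣ y.1 ∧ d ∣ y.2) : d ∣ x.1 ∧ d ∣ x.2 := by
  have hd2 : d.Coprime 2 := Nat.coprime_two_right.mpr hd
  obtain ⟨hy1, hy2⟩ := hy
  rcases h with ⟨hlt, rfl⟩ | ⟨hlt, rfl⟩ | ⟨t, ht, rfl⟩ | ⟨t, ht, rfl⟩
  · have hx1 : d ∣ x.1 := hd2.dvd_of_dvd_mul_left hy1
    exact ⟨hx1, by simpa [Nat.sub_add_cancel hlt.le] using dvd_add hy2 hx1⟩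
  · have hx2 : d ∣ x.2 := hd2.dvd_of_dvd_mul_left hy2
    exact ⟨by simpa [Nat.sub_add_cancel hlt.le] using dvd_add hy1 hx2, hx2⟩
  · exact ⟨ht ▸ hy1.mul_left 2, (Nat.dvd_add_left hy1).mp hy2⟩
  · exact ⟨(Nat.dvd_add_left hy2).mp hy1, ht ▸ hy2.mul_left 2⟩

theorem InOrbit.dvd_of_dvd {d : ℕ} (hd : Odd d) {x y : ℕ × ℕ} (h : InOrbit x y)
    (hy : d ∣ y.1 ∧ d ∣ y.2) : d ∣ x.1 ∧ d ∣ x.2 := by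
  induction h with
  | refl => exact hy
  | tail _ hstep ih => exact ih (hstep.dvd_of_dvd hd hy)

theorem not_complete_of_not_prime_power (n : ℕ) (hn : 0 < n)
    (h2 : ¬ ∃ m : ℕ, n = 2 ^ m) (hp : ¬ (n.Prime ∧ Odd n)) :
    ∃ p : ℕ, p.Prime ∧ Odd p ∧ p ∣ n ∧ p < n ∧
      {q : ℕ × ℕ | InOrbit (1, n - 1) q} ≠ {q : ℕ × ℕ | InOrbit (p, n - p) q} := by
  obtain ⟨p, hpp, hpn, hpodd⟩ := n.eq_two_pow_or_exists_odd_prime_and_dvd.resolve_left h2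
  have hplt : p < n :=
    (Nat.le_of_dvd hn hpn).lt_of_ne fun hpeq => hp ⟨hpeq ▸ hpp, hpeq ▸ hpodd⟩
  refine ⟨p, hpp, hpodd, hpn, hplt, fun horbit => ?_⟩
  have hmem : InOrbit (1, n - 1) (p, n - p) := by
    change (p, n - p) ∈ {q | InOrbit (1, n - 1) q}
    rw [horbit]
    exact Relation.ReflTransGen.refl
  have hp1 : p ∣ 1 := (hmem.dvd_of_dvd hpodd ⟨dvd_rfl, Nat.dvd_sub hpn dvd_rfl⟩).1
  exact hpp.one_lt.ne' (Nat.dvd_one.mp hp1)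
end

section
/- In the free alternative groupoid on one generator x (the free magma on one generator modulo the left alternative law x(xy)=(xx)y and the right alternative law x(yy)=(xy)y), all parenthesizations of the product of n copies of x are equal whenever n ≤ 5. -/
/-- The congruence on the free magma on one generator generated by the
left alternative law `a(ab) = (aa)b` and the right alternative law `a(bb) = (ab)b`. -/
inductive AltRel : FreeMagma Unit → FreeMagma Unit → Prop
  | leftAlt (a b : FreeMagma Unit) : AltRel (a * (a * b)) ((a * a) * b)
  | rightAlt (a b : FreeMagma Unit) : AltRel (a * (b * b)) ((a * b) * b)
  | refl (a : FreeMagma Unit) : AltRel a a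
  | symm {a b : FreeMagma Unit} : AltRel a b → AltRel b a
  | trans {a b c : FreeMagma Unit} : AltRel a b → AltRel b c → AltRel a c
  | mul {a b c d : FreeMagma Unit} : AltRel a b → AltRel c d → AltRel (a * c) (b * d)

/-- The number of leaves (letters) of a word in the free magma. -/
def wordLength : FreeMagma Unit → ℕ
  | FreeMagma.of _ => 1
  | FreeMagma.mul a b => wordLength a + wordLength b

private def xx : FreeMagma Unit := FreeMagma.of ()

/-- Canonical left-associated word of length `n` (for `n ≥ 1`). -/
def canonW : ℕ → FreeMagma Unit
  | 0 => xx
  | 1 => xx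
  | (n+2) => canonW (n+1) * xx

lemma wordLength_pos (w : FreeMagma Unit) : 1 ≤ wordLength w := by
  induction w using FreeMagma.rec with
  | of u => simp [wordLength]
  | mul a b iha ihb => simp [wordLength]; omega

lemma m12 : AltRel (xx * (xx * xx)) ((xx * xx) * xx) := AltRel.leftAlt xx xx

lemma m22 : AltRel ((xx*xx) * (xx*xx)) (((xx*xx)*xx)*xx) := AltRel.rightAlt (xx*xx) xx

lemma m13 : AltRel (xx * ((xx*xx)*xx)) (((xx*xx)*xx)*xx) :=
  ((AltRel.mul (AltRel.refl xx) m12.symm).trans (AltRel.leftAlt xx (xx*xx))).trans m22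

lemma m32 : AltRel (((xx*xx)*xx) * (xx*xx)) ((((xx*xx)*xx)*xx)*xx) :=
  AltRel.rightAlt ((xx*xx)*xx) xx

lemma m23 : AltRel ((xx*xx) * ((xx*xx)*xx)) ((((xx*xx)*xx)*xx)*xx) :=
  (AltRel.leftAlt (xx*xx) xx).trans (AltRel.mul m22 (AltRel.refl xx))

lemma m14 : AltRel (xx * (((xx*xx)*xx)*xx)) ((((xx*xx)*xx)*xx)*xx) :=
  (((AltRel.mul (AltRel.refl xx) m22.symm).trans (AltRel.rightAlt xx (xx*xx))).trans
    (AltRel.mul m12 (AltRel.refl (xx*xx)))).trans m32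

lemma toCanon (w : FreeMagma Unit) (h : wordLength w ≤ 5) :
    AltRel w (canonW (wordLength w)) := by
  induction w using FreeMagma.rec with
  | of u =>
    simp [wordLength, canonW, xx]
    exact AltRel.refl _
  | mul a b iha ihb =>
    have ha := wordLength_pos a
    have hb := wordLength_pos b
    simp only [wordLength] at h ⊢
    have iha' := iha (by omega)
    have ihb' := ihb (by omega)
    have step : AltRel (a * b) (canonW (wordLength a) * canonW (wordLength b)) :=
      AltRel.mul iha' ihb'
    refine step.trans ?_
    have h5 : wordLength a ≤ 4 := by omega
    have h5b : wordLength b ≤ 4 := by omega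
    interval_cases ha' : wordLength a <;> interval_cases hb' : wordLength b <;>
      simp_all [canonW] <;>
      first
        | exact AltRel.refl _
        | exact m12
        | exact m22
        | exact m13
        | exact m32
        | exact m23
        | exact m14

/-- In the free alternative groupoid on one generator, the power `xⁿ` is
well-defined for every `n ≤ 5`: any two words of the same length `n ≤ 5`
are equal modulo the alternative laws. -/
theorem powers_le_five_well_defined (n : ℕ) (hn : n ≤ 5)
    (w₁ w₂ : FreeMagma Unit) (h₁ : wordLength w₁ = n) (h₂ : wordLength w₂ = n) :
    AltRel w₁ w₂ := by
  have t1 := toCanon w₁ (by omega)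
  have t2 := toCanon w₂ (by omega)
  rw [h₁] at t1
  rw [h₂] at t2
  exact t1.trans t2.symm
end

section
/- Let n be an odd positive integer all of whose prime divisors are congruent to 3 modulo 8. Then there exists k ≥ 0 with 2^k ≡ −1 (mod n). The same conclusion holds if all prime divisors of n are congruent to 5 modulo 8. Conversely, if n has a prime divisor congruent to 7 modulo 8, or has prime divisors p ≡ 3 (mod 8) and q ≡ 5 (mod 8) simultaneously, then no such k exists. -/
/-! If `2 ^ k ≡ -1` modulo a prime `p ∣ n`, taking Legendre symbols gives `χ₄ p = χ₈ p ^ k`: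
this is impossible for `p ≡ 7 (mod 8)`, forces `k` odd for `p ≡ 3` and `k` even for `p ≡ 5`.
Conversely, if `χ₈ p = -1` then Euler's criterion gives `2 ^ (p / 2) ≡ -1 (mod p)`, which lifts to
`2 ^ (p / 2 * p ^ e) ≡ -1 (mod p ^ e)`. When every `p ∣ n` has `p / 2 = c * u` with `u` odd and
the same `c`, raising to odd powers and the Chinese remainder theorem glue these into a solution
modulo `n`. -/

open ZMod

theorem Int.pow_pow_modEq_neg_one_of_odd {p : ℕ} (hp : Odd p) {a : ℤ} (h : a ≡ -1 [ZMOD p])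
    (e : ℕ) : a ^ p ^ e ≡ -1 [ZMOD p ^ (e + 1)] := by
  have := dvd_sub_pow_of_dvd_sub (Int.ModEq.dvd h.symm) e
  rw [hp.pow.neg_one_pow] at this
  exact (Int.modEq_of_dvd (by simpa using this)).symm

theorem Int.pow_mul_odd_modEq_neg_one {x n : ℤ} {m u : ℕ} (h : x ^ m ≡ -1 [ZMOD n]) (hu : Odd u) :
    x ^ (m * u) ≡ -1 [ZMOD n] := by
  rw [pow_mul, ← hu.neg_one_pow]
  exact h.pow u

theorem Int.exists_odd_pow_modEq_neg_one_mul {x : ℤ} {c a b : ℕ} (hab : a.Coprime b)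
    (ha : ∃ u, Odd u ∧ x ^ (c * u) ≡ -1 [ZMOD a]) (hb : ∃ v, Odd v ∧ x ^ (c * v) ≡ -1 [ZMOD b]) :
    ∃ w, Odd w ∧ x ^ (c * w) ≡ -1 [ZMOD (a * b : ℕ)] := by
  obtain ⟨u, hu, hxu⟩ := ha
  obtain ⟨v, hv, hxv⟩ := hb
  refine ⟨u * v, hu.mul hv, ?_⟩
  rw [Nat.cast_mul, ← Int.modEq_and_modEq_iff_modEq_mul (by simpa using hab)]
  constructor
  · rw [← mul_assoc]; exact Int.pow_mul_odd_modEq_neg_one hxu hv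
  · rw [mul_comm u, ← mul_assoc]; exact Int.pow_mul_odd_modEq_neg_one hxv hu

theorem Int.exists_odd_pow_modEq_neg_one_of_forall_prime_pow {x : ℤ} {c n : ℕ} (hn : n ≠ 0)
    (h : ∀ p, p.Prime → p ∣ n → ∀ e, ∃ u, Odd u ∧ x ^ (c * u) ≡ -1 [ZMOD p ^ e]) :
    ∃ u, Odd u ∧ x ^ (c * u) ≡ -1 [ZMOD n] := by
  induction n using Nat.recOnPosPrimePosCoprime with
  | prime_pow p e hp _ => exact_mod_cast h p hp (dvd_pow_self p (by omega)) e
  | zero => exact absurd rfl hn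
  | one => exact ⟨1, odd_one, Int.modEq_one⟩
  | coprime a b ha hb hab iha ihb =>
    exact Int.exists_odd_pow_modEq_neg_one_mul hab
      (iha (by omega) fun p hp hpa => h p hp (hpa.mul_right b))
      (ihb (by omega) fun p hp hpb => h p hp (hpb.mul_left a))

theorem odd_of_χ₈_eq_neg_one {n : ℕ} (h : χ₈ n = -1) : Odd n := by
  rw [χ₈_nat_eq_if_mod_eight] at h
  split_ifs at h
  exact Nat.odd_iff.2 (by omega)

theorem χ₈_nat_eq_neg_one {n : ℕ} (h : n % 8 = 3 ∨ n % 8 = 5) : χ₈ n = -1 := by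
  rw [χ₈_nat_eq_if_mod_eight, if_neg (by omega), if_neg (by omega)]

section
variable {p : ℕ} [Fact p.Prime]

theorem two_pow_div_two_modEq_neg_one (hp : χ₈ p = -1) : (2 : ℤ) ^ (p / 2) ≡ -1 [ZMOD p] := by
  rw [← ZMod.intCast_eq_intCast_iff, Int.cast_pow, ← legendreSym.eq_pow,
    legendreSym.at_two ((odd_of_χ₈_eq_neg_one hp).ne_two_of_dvd_nat dvd_rfl), hp]

theorem two_pow_modEq_neg_one_prime_pow (hp : χ₈ p = -1) (e : ℕ) :
    (2 : ℤ) ^ (p / 2 * p ^ e) ≡ -1 [ZMOD p ^ e] := by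
  rw [pow_mul]
  exact (Int.pow_pow_modEq_neg_one_of_odd (odd_of_χ₈_eq_neg_one hp)
    (two_pow_div_two_modEq_neg_one hp) e).of_dvd (pow_dvd_pow _ e.le_succ)

theorem χ₄_eq_χ₈_pow_of_two_pow_modEq_neg_one (hp : p ≠ 2) {k : ℕ}
    (h : (2 : ℤ) ^ k ≡ -1 [ZMOD p]) : χ₄ p = χ₈ p ^ k := by
  rw [← legendreSym.at_neg_one hp, ← legendreSym.at_two hp, legendreSym.mod p (-1), ← h.eq,
    ← legendreSym.mod]
  exact map_pow (legendreSym.hom p) 2 k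

end

theorem exists_two_pow_modEq_neg_one {n c : ℕ} (hn : n ≠ 0)
    (h : ∀ p, p.Prime → p ∣ n → χ₈ p = -1 ∧ ∃ u, Odd u ∧ p / 2 = c * u) :
    ∃ k, (2 : ℤ) ^ k ≡ -1 [ZMOD n] := by
  obtain ⟨u, -, hu⟩ := Int.exists_odd_pow_modEq_neg_one_of_forall_prime_pow (x := 2) hn
    fun p hp hpn e => by
      have := Fact.mk hp
      obtain ⟨hχ, u, hu, hpu⟩ := h p hp hpn
      refine ⟨u * p ^ e, hu.mul (odd_of_χ₈_eq_neg_one hχ).pow, ?_⟩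
      rw [← mul_assoc, ← hpu]
      exact two_pow_modEq_neg_one_prime_pow hχ e
  exact ⟨_, hu⟩

theorem neg_one_power_of_two_mod_n_general (n : ℕ) (hn : 0 < n) :
    ((∀ p : ℕ, p.Prime → p ∣ n → p % 8 = 3) →
        ∃ k : ℕ, (2 : ℤ) ^ k ≡ -1 [ZMOD (n : ℤ)]) ∧
      ((∀ p : ℕ, p.Prime → p ∣ n → p % 8 = 5) →
        ∃ k : ℕ, (2 : ℤ) ^ k ≡ -1 [ZMOD (n : ℤ)]) ∧
      ((∃ p : ℕ, p.Prime ∧ p ∣ n ∧ p % 8 = 7) →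
        ¬ ∃ k : ℕ, (2 : ℤ) ^ k ≡ -1 [ZMOD (n : ℤ)]) ∧
      ((∃ p q : ℕ, p.Prime ∧ q.Prime ∧ p ∣ n ∧ q ∣ n ∧ p % 8 = 3 ∧ q % 8 = 5) →
        ¬ ∃ k : ℕ, (2 : ℤ) ^ k ≡ -1 [ZMOD (n : ℤ)]) := by
  have χ₄_eq_χ₈_pow {p k : ℕ} (hp : p.Prime) (hpn : p ∣ n) (hp2 : p ≠ 2)
      (hk : (2 : ℤ) ^ k ≡ -1 [ZMOD n]) : χ₄ p = χ₈ p ^ k :=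
    have := Fact.mk hp
    χ₄_eq_χ₈_pow_of_two_pow_modEq_neg_one hp2 (hk.of_dvd (Int.natCast_dvd_natCast.2 hpn))
  refine ⟨fun h => ?_, fun h => ?_, ?_, ?_⟩
  · refine exists_two_pow_modEq_neg_one (c := 1) hn.ne' fun p hp hpn => ?_
    have hp8 := h p hp hpn
    exact ⟨χ₈_nat_eq_neg_one (.inl hp8), p / 2, Nat.odd_iff.2 (by omega), (one_mul _).symm⟩
  · refine exists_two_pow_modEq_neg_one (c := 2) hn.ne' fun p hp hpn => ?_
    have hp8 := h p hp hpn
    exact ⟨χ₈_nat_eq_neg_one (.inr hp8), p / 4, Nat.odd_iff.2 (by omega), by omega⟩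
  · rintro ⟨p, hp, hpn, hp8⟩ ⟨k, hk⟩
    have := χ₄_eq_χ₈_pow hp hpn (by omega) hk
    rw [χ₄_nat_three_mod_four (by omega), χ₈_nat_eq_if_mod_eight, if_neg (by omega),
      if_pos (by omega), one_pow] at this
    omega
  · rintro ⟨p, q, hp, hq, hpn, hqn, hp8, hq8⟩ ⟨k, hk⟩
    have hpk := χ₄_eq_χ₈_pow hp hpn (by omega) hk
    have hqk := χ₄_eq_χ₈_pow hq hqn (by omega) hk
    rw [χ₄_nat_three_mod_four (by omega), χ₈_nat_eq_neg_one (.inl hp8)] at hpk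
    rw [χ₄_nat_one_mod_four (by omega), χ₈_nat_eq_neg_one (.inr hq8), ← hpk] at hqk
    omega

theorem neg_one_power_of_two_mod_n (n : ℕ) (hn : 0 < n) (hodd : Odd n) :
    ((∀ p : ℕ, p.Prime → p ∣ n → p % 8 = 3) →
        ∃ k : ℕ, (2 : ℤ) ^ k ≡ -1 [ZMOD (n : ℤ)]) ∧
      ((∀ p : ℕ, p.Prime → p ∣ n → p % 8 = 5) →
        ∃ k : ℕ, (2 : ℤ) ^ k ≡ -1 [ZMOD (n : ℤ)]) ∧
      ((∃ p : ℕ, p.Prime ∧ p ∣ n ∧ p % 8 = 7) →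
        ¬ ∃ k : ℕ, (2 : ℤ) ^ k ≡ -1 [ZMOD (n : ℤ)]) ∧
      ((∃ p q : ℕ, p.Prime ∧ q.Prime ∧ p ∣ n ∧ q ∣ n ∧ p % 8 = 3 ∧ q % 8 = 5) →
        ¬ ∃ k : ℕ, (2 : ℤ) ^ k ≡ -1 [ZMOD (n : ℤ)]) :=
  neg_one_power_of_two_mod_n_general n hn
end
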